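/- For the rewriting system on strings over {▽, △, ◁, ▷} with rules ◁△→◁, ◁▽→◁, △▷→▷, ▽▷→▷, △△→△, ▽▽→▽, ▽△→△▽, △▽→▽△, ◁▷→ε (and their length-increasing reversals allowed), every string s that can be reduced to the empty string admits a shortest rewriting sequence to the empty string which never uses a replacement whose right-hand side is longer than its left-hand side. -/
import Mathlib


/-- The alphabet: `D` = ▽, `U` = △, `L` = ◁, `R` = ▷. -/
inductive RSym : Type
  | D | U | L | R
deriving DecidableEq

/-- The (length-nonincreasing) replacement rules. -/
inductive Rule : List RSym → List RSym → Prop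
  | LU : Rule [.L, .U] [.L]
  | LD : Rule [.L, .D] [.L]
  | UR : Rule [.U, .R] [.R]
  | DR : Rule [.D, .R] [.R]
  | UU : Rule [.U, .U] [.U]
  | DD : Rule [.D, .D] [.D]
  | DU : Rule [.D, .U] [.U, .D]
  | UD : Rule [.U, .D] [.D, .U]
  | LR : Rule [.L, .R] []

/-- A parallel rewriting step: simultaneously apply replacements whose
left-hand sides occupy pairwise disjoint substrings. -/
inductive Step : List RSym → List RSym → Prop
  | nil : Step [] []
  | copy (a : RSym) {s t : List RSym} : Step s t → Step (a :: s) (a :: t)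
  | rule {l r s t : List RSym} : Rule l r → Step s t → Step (l ++ s) (r ++ t)

/-- `StepN n s t`: `t` is reachable from `s` in `n` parallel rewriting steps. -/
inductive StepN : ℕ → List RSym → List RSym → Prop
  | refl (s : List RSym) : StepN 0 s s
  | step {n : ℕ} {s u t : List RSym} : Step s u → StepN n u t → StepN (n + 1) s t

/-- Rules extended with their (possibly length-increasing) reversals. -/
def RuleX (l r : List RSym) : Prop := Rule l r ∨ Rule r l

/-- A parallel rewriting step in the extended system. -/
inductive StepX : List RSym → List RSym → Prop
  | nil : StepX [] []
  | copy (a : RSym) {s t : List RSym} : StepX s t → StepX (a :: s) (a :: t)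
  | rule {l r s t : List RSym} : RuleX l r → StepX s t → StepX (l ++ s) (r ++ t)

/-- `StepXN n s t`: reachability in `n` parallel steps of the extended system. -/
inductive StepXN : ℕ → List RSym → List RSym → Prop
  | refl (s : List RSym) : StepXN 0 s s
  | step {n : ℕ} {s u t : List RSym} : StepX s u → StepXN n u t → StepXN (n + 1) s t

/- ===== auxiliary development for the projection proof ===== -/

/-- Marked symbols: a symbol together with a flag (`true` = good/original,
`false` = bad, i.e. descending from material created by reversed rules). -/
abbrev MSym := RSym × Bool

/-- Forget the marks. -/
def mErase (t : List MSym) : List RSym := t.map Prod.fst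

/-- Keep only the good symbols. -/
def mGood (t : List MSym) : List RSym := (t.filter (fun p => p.2)).map Prod.fst

@[simp] lemma mErase_nil : mErase [] = [] := rfl
@[simp] lemma mErase_cons (a : MSym) (t : List MSym) :
    mErase (a :: t) = a.1 :: mErase t := rfl
@[simp] lemma mGood_nil : mGood [] = [] := rfl
@[simp] lemma mGood_cons_true (a : RSym) (t : List MSym) :
    mGood ((a, true) :: t) = a :: mGood t := rfl
@[simp] lemma mGood_cons_false (a : RSym) (t : List MSym) :
    mGood ((a, false) :: t) = mGood t := rfl

/-- `MValid d t` : reading `t` from the left starting with `d` currently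
open bad `L`-brackets, the marking is well-formed: bad brackets are
well-nested and good symbols occur only at bad-depth `0`. -/
inductive MValid : ℕ → List MSym → Prop
  | nil : MValid 0 []
  | good (a : RSym) {t : List MSym} : MValid 0 t → MValid 0 ((a, true) :: t)
  | badU {d : ℕ} {t : List MSym} : MValid d t → MValid d ((.U, false) :: t)
  | badD {d : ℕ} {t : List MSym} : MValid d t → MValid d ((.D, false) :: t)
  | badL {d : ℕ} {t : List MSym} : MValid (d+1) t → MValid d ((.L, false) :: t)
  | badR {d : ℕ} {t : List MSym} : MValid d t → MValid (d+1) ((.R, false) :: t)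

lemma mErase_eq_cons {th : List MSym} {a : RSym} {t : List RSym}
    (h : mErase th = a :: t) :
    ∃ f th', th = (a, f) :: th' ∧ mErase th' = t := by
  cases th with
  | nil => simp [mErase] at h
  | cons x th' =>
    obtain ⟨x1, x2⟩ := x
    simp only [mErase, List.map_cons, List.cons.injEq] at h
    exact ⟨x2, th', by rw [h.1], h.2⟩

lemma mErase_eq_nil {th : List MSym} (h : mErase th = []) : th = [] := by
  cases th <;> simp [mErase] at h ⊢

/-- The key lifting lemma: a step of the extended system on unmarked strings
lifts to marked strings, preserving validity, in such a way that the good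
parts perform a step of the restricted system. -/
theorem stepX_lift {t u : List RSym} (h : StepX t u) :
    ∀ {d : ℕ} {th : List MSym}, mErase th = t → MValid d th →
      ∃ uh, mErase uh = u ∧ MValid d uh ∧ Step (mGood th) (mGood uh) := by
  induction h with
  | nil =>
    intro d th he hv
    have : th = [] := mErase_eq_nil he
    subst this
    exact ⟨[], rfl, hv, Step.nil⟩
  | copy a h ih =>
    intro d th he hv
    obtain ⟨f, th', rfl, he'⟩ := mErase_eq_cons he
    cases hv with
    | good _ hv' =>
      obtain ⟨uh', h1, h2, h3⟩ := ih he' hv'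
      exact ⟨(a, true) :: uh', by simp [h1], MValid.good a h2, Step.copy a h3⟩
    | badU hv' =>
      obtain ⟨uh', h1, h2, h3⟩ := ih he' hv'
      exact ⟨(.U, false) :: uh', by simp [h1], MValid.badU h2, h3⟩
    | badD hv' =>
      obtain ⟨uh', h1, h2, h3⟩ := ih he' hv'
      exact ⟨(.D, false) :: uh', by simp [h1], MValid.badD h2, h3⟩
    | badL hv' =>
      obtain ⟨uh', h1, h2, h3⟩ := ih he' hv'
      exact ⟨(.L, false) :: uh', by simp [h1], MValid.badL h2, h3⟩
    | badR hv' =>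
      obtain ⟨uh', h1, h2, h3⟩ := ih he' hv'
      exact ⟨(.R, false) :: uh', by simp [h1], MValid.badR h2, h3⟩
  | rule hr h ih =>
    intro d th he hv
    try simp only [List.cons_append, List.nil_append] at he
    rcases hr with hr | hr
    · -- forward rules
      cases hr with
      | LU =>
        obtain ⟨f1, th1, rfl, he1⟩ := mErase_eq_cons he
        obtain ⟨f2, th2, rfl, he2⟩ := mErase_eq_cons he1
        cases hv with
        | good _ hv1 =>
          cases hv1 with
          | good _ hv2 =>
            obtain ⟨uh', h1, h2, h3⟩ := ih he2 hv2
            exact ⟨(.L, true) :: uh', by simp [h1], MValid.good _ h2,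
              Step.rule Rule.LU h3⟩
          | badU hv2 =>
            obtain ⟨uh', h1, h2, h3⟩ := ih he2 hv2
            exact ⟨(.L, true) :: uh', by simp [h1], MValid.good _ h2,
              Step.copy _ h3⟩
        | badL hv1 =>
          cases hv1 with
          | badU hv2 =>
            obtain ⟨uh', h1, h2, h3⟩ := ih he2 hv2
            exact ⟨(.L, false) :: uh', by simp [h1], MValid.badL h2, h3⟩
      | LD =>
        obtain ⟨f1, th1, rfl, he1⟩ := mErase_eq_cons he
        obtain ⟨f2, th2, rfl, he2⟩ := mErase_eq_cons he1
        cases hv with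
        | good _ hv1 =>
          cases hv1 with
          | good _ hv2 =>
            obtain ⟨uh', h1, h2, h3⟩ := ih he2 hv2
            exact ⟨(.L, true) :: uh', by simp [h1], MValid.good _ h2,
              Step.rule Rule.LD h3⟩
          | badD hv2 =>
            obtain ⟨uh', h1, h2, h3⟩ := ih he2 hv2
            exact ⟨(.L, true) :: uh', by simp [h1], MValid.good _ h2,
              Step.copy _ h3⟩
        | badL hv1 =>
          cases hv1 with
          | badD hv2 =>
            obtain ⟨uh', h1, h2, h3⟩ := ih he2 hv2
            exact ⟨(.L, false) :: uh', by simp [h1], MValid.badL h2, h3⟩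
      | UR =>
        obtain ⟨f1, th1, rfl, he1⟩ := mErase_eq_cons he
        obtain ⟨f2, th2, rfl, he2⟩ := mErase_eq_cons he1
        cases hv with
        | good _ hv1 =>
          cases hv1 with
          | good _ hv2 =>
            obtain ⟨uh', h1, h2, h3⟩ := ih he2 hv2
            exact ⟨(.R, true) :: uh', by simp [h1], MValid.good _ h2,
              Step.rule Rule.UR h3⟩
        | badU hv1 =>
          cases hv1 with
          | good _ hv2 =>
            obtain ⟨uh', h1, h2, h3⟩ := ih he2 hv2
            exact ⟨(.R, true) :: uh', by simp [h1], MValid.good _ h2,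
              Step.copy _ h3⟩
          | badR hv2 =>
            obtain ⟨uh', h1, h2, h3⟩ := ih he2 hv2
            exact ⟨(.R, false) :: uh', by simp [h1], MValid.badR h2, h3⟩
      | DR =>
        obtain ⟨f1, th1, rfl, he1⟩ := mErase_eq_cons he
        obtain ⟨f2, th2, rfl, he2⟩ := mErase_eq_cons he1
        cases hv with
        | good _ hv1 =>
          cases hv1 with
          | good _ hv2 =>
            obtain ⟨uh', h1, h2, h3⟩ := ih he2 hv2
            exact ⟨(.R, true) :: uh', by simp [h1], MValid.good _ h2,
              Step.rule Rule.DR h3⟩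
        | badD hv1 =>
          cases hv1 with
          | good _ hv2 =>
            obtain ⟨uh', h1, h2, h3⟩ := ih he2 hv2
            exact ⟨(.R, true) :: uh', by simp [h1], MValid.good _ h2,
              Step.copy _ h3⟩
          | badR hv2 =>
            obtain ⟨uh', h1, h2, h3⟩ := ih he2 hv2
            exact ⟨(.R, false) :: uh', by simp [h1], MValid.badR h2, h3⟩
      | UU =>
        obtain ⟨f1, th1, rfl, he1⟩ := mErase_eq_cons he
        obtain ⟨f2, th2, rfl, he2⟩ := mErase_eq_cons he1
        cases hv with
        | good _ hv1 =>
          cases hv1 with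
          | good _ hv2 =>
            obtain ⟨uh', h1, h2, h3⟩ := ih he2 hv2
            exact ⟨(.U, true) :: uh', by simp [h1], MValid.good _ h2,
              Step.rule Rule.UU h3⟩
          | badU hv2 =>
            obtain ⟨uh', h1, h2, h3⟩ := ih he2 hv2
            exact ⟨(.U, true) :: uh', by simp [h1], MValid.good _ h2,
              Step.copy _ h3⟩
        | badU hv1 =>
          cases hv1 with
          | good _ hv2 =>
            obtain ⟨uh', h1, h2, h3⟩ := ih he2 hv2
            exact ⟨(.U, true) :: uh', by simp [h1], MValid.good _ h2,
              Step.copy _ h3⟩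
          | badU hv2 =>
            obtain ⟨uh', h1, h2, h3⟩ := ih he2 hv2
            exact ⟨(.U, false) :: uh', by simp [h1], MValid.badU h2, h3⟩
      | DD =>
        obtain ⟨f1, th1, rfl, he1⟩ := mErase_eq_cons he
        obtain ⟨f2, th2, rfl, he2⟩ := mErase_eq_cons he1
        cases hv with
        | good _ hv1 =>
          cases hv1 with
          | good _ hv2 =>
            obtain ⟨uh', h1, h2, h3⟩ := ih he2 hv2
            exact ⟨(.D, true) :: uh', by simp [h1], MValid.good _ h2,
              Step.rule Rule.DD h3⟩
          | badD hv2 =>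
            obtain ⟨uh', h1, h2, h3⟩ := ih he2 hv2
            exact ⟨(.D, true) :: uh', by simp [h1], MValid.good _ h2,
              Step.copy _ h3⟩
        | badD hv1 =>
          cases hv1 with
          | good _ hv2 =>
            obtain ⟨uh', h1, h2, h3⟩ := ih he2 hv2
            exact ⟨(.D, true) :: uh', by simp [h1], MValid.good _ h2,
              Step.copy _ h3⟩
          | badD hv2 =>
            obtain ⟨uh', h1, h2, h3⟩ := ih he2 hv2
            exact ⟨(.D, false) :: uh', by simp [h1], MValid.badD h2, h3⟩
      | DU =>
        obtain ⟨f1, th1, rfl, he1⟩ := mErase_eq_cons he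
        obtain ⟨f2, th2, rfl, he2⟩ := mErase_eq_cons he1
        cases hv with
        | good _ hv1 =>
          cases hv1 with
          | good _ hv2 =>
            obtain ⟨uh', h1, h2, h3⟩ := ih he2 hv2
            exact ⟨(.U, true) :: (.D, true) :: uh', by simp [h1],
              MValid.good _ (MValid.good _ h2), Step.rule Rule.DU h3⟩
          | badU hv2 =>
            obtain ⟨uh', h1, h2, h3⟩ := ih he2 hv2
            exact ⟨(.U, false) :: (.D, true) :: uh', by simp [h1],
              MValid.badU (MValid.good _ h2), Step.copy _ h3⟩
        | badD hv1 =>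
          cases hv1 with
          | good _ hv2 =>
            obtain ⟨uh', h1, h2, h3⟩ := ih he2 hv2
            exact ⟨(.U, true) :: (.D, false) :: uh', by simp [h1],
              MValid.good _ (MValid.badD h2), Step.copy _ h3⟩
          | badU hv2 =>
            obtain ⟨uh', h1, h2, h3⟩ := ih he2 hv2
            exact ⟨(.U, false) :: (.D, false) :: uh', by simp [h1],
              MValid.badU (MValid.badD h2), h3⟩
      | UD =>
        obtain ⟨f1, th1, rfl, he1⟩ := mErase_eq_cons he
        obtain ⟨f2, th2, rfl, he2⟩ := mErase_eq_cons he1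
        cases hv with
        | good _ hv1 =>
          cases hv1 with
          | good _ hv2 =>
            obtain ⟨uh', h1, h2, h3⟩ := ih he2 hv2
            exact ⟨(.D, true) :: (.U, true) :: uh', by simp [h1],
              MValid.good _ (MValid.good _ h2), Step.rule Rule.UD h3⟩
          | badD hv2 =>
            obtain ⟨uh', h1, h2, h3⟩ := ih he2 hv2
            exact ⟨(.D, false) :: (.U, true) :: uh', by simp [h1],
              MValid.badD (MValid.good _ h2), Step.copy _ h3⟩
        | badU hv1 =>
          cases hv1 with
          | good _ hv2 =>
            obtain ⟨uh', h1, h2, h3⟩ := ih he2 hv2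
            exact ⟨(.D, true) :: (.U, false) :: uh', by simp [h1],
              MValid.good _ (MValid.badU h2), Step.copy _ h3⟩
          | badD hv2 =>
            obtain ⟨uh', h1, h2, h3⟩ := ih he2 hv2
            exact ⟨(.D, false) :: (.U, false) :: uh', by simp [h1],
              MValid.badD (MValid.badU h2), h3⟩
      | LR =>
        obtain ⟨f1, th1, rfl, he1⟩ := mErase_eq_cons he
        obtain ⟨f2, th2, rfl, he2⟩ := mErase_eq_cons he1
        cases hv with
        | good _ hv1 =>
          cases hv1 with
          | good _ hv2 =>
            obtain ⟨uh', h1, h2, h3⟩ := ih he2 hv2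
            exact ⟨uh', h1, h2, Step.rule Rule.LR h3⟩
        | badL hv1 =>
          cases hv1 with
          | badR hv2 =>
            obtain ⟨uh', h1, h2, h3⟩ := ih he2 hv2
            exact ⟨uh', h1, h2, h3⟩
    · -- reversed rules
      cases hr with
      | LU =>
        obtain ⟨f1, th1, rfl, he1⟩ := mErase_eq_cons he
        cases hv with
        | good _ hv1 =>
          obtain ⟨uh', h1, h2, h3⟩ := ih he1 hv1
          exact ⟨(.L, true) :: (.U, false) :: uh', by simp [h1],
            MValid.good _ (MValid.badU h2), Step.copy _ h3⟩
        | badL hv1 =>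
          obtain ⟨uh', h1, h2, h3⟩ := ih he1 hv1
          exact ⟨(.L, false) :: (.U, false) :: uh', by simp [h1],
            MValid.badL (MValid.badU h2), h3⟩
      | LD =>
        obtain ⟨f1, th1, rfl, he1⟩ := mErase_eq_cons he
        cases hv with
        | good _ hv1 =>
          obtain ⟨uh', h1, h2, h3⟩ := ih he1 hv1
          exact ⟨(.L, true) :: (.D, false) :: uh', by simp [h1],
            MValid.good _ (MValid.badD h2), Step.copy _ h3⟩
        | badL hv1 =>
          obtain ⟨uh', h1, h2, h3⟩ := ih he1 hv1
          exact ⟨(.L, false) :: (.D, false) :: uh', by simp [h1],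
            MValid.badL (MValid.badD h2), h3⟩
      | UR =>
        obtain ⟨f1, th1, rfl, he1⟩ := mErase_eq_cons he
        cases hv with
        | good _ hv1 =>
          obtain ⟨uh', h1, h2, h3⟩ := ih he1 hv1
          exact ⟨(.U, false) :: (.R, true) :: uh', by simp [h1],
            MValid.badU (MValid.good _ h2), Step.copy _ h3⟩
        | badR hv1 =>
          obtain ⟨uh', h1, h2, h3⟩ := ih he1 hv1
          exact ⟨(.U, false) :: (.R, false) :: uh', by simp [h1],
            MValid.badU (MValid.badR h2), h3⟩
      | DR =>
        obtain ⟨f1, th1, rfl, he1⟩ := mErase_eq_cons he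
        cases hv with
        | good _ hv1 =>
          obtain ⟨uh', h1, h2, h3⟩ := ih he1 hv1
          exact ⟨(.D, false) :: (.R, true) :: uh', by simp [h1],
            MValid.badD (MValid.good _ h2), Step.copy _ h3⟩
        | badR hv1 =>
          obtain ⟨uh', h1, h2, h3⟩ := ih he1 hv1
          exact ⟨(.D, false) :: (.R, false) :: uh', by simp [h1],
            MValid.badD (MValid.badR h2), h3⟩
      | UU =>
        obtain ⟨f1, th1, rfl, he1⟩ := mErase_eq_cons he
        cases hv with
        | good _ hv1 =>
          obtain ⟨uh', h1, h2, h3⟩ := ih he1 hv1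
          exact ⟨(.U, true) :: (.U, false) :: uh', by simp [h1],
            MValid.good _ (MValid.badU h2), Step.copy _ h3⟩
        | badU hv1 =>
          obtain ⟨uh', h1, h2, h3⟩ := ih he1 hv1
          exact ⟨(.U, false) :: (.U, false) :: uh', by simp [h1],
            MValid.badU (MValid.badU h2), h3⟩
      | DD =>
        obtain ⟨f1, th1, rfl, he1⟩ := mErase_eq_cons he
        cases hv with
        | good _ hv1 =>
          obtain ⟨uh', h1, h2, h3⟩ := ih he1 hv1
          exact ⟨(.D, true) :: (.D, false) :: uh', by simp [h1],
            MValid.good _ (MValid.badD h2), Step.copy _ h3⟩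
        | badD hv1 =>
          obtain ⟨uh', h1, h2, h3⟩ := ih he1 hv1
          exact ⟨(.D, false) :: (.D, false) :: uh', by simp [h1],
            MValid.badD (MValid.badD h2), h3⟩
      | DU =>
        -- segment UD → DU
        obtain ⟨f1, th1, rfl, he1⟩ := mErase_eq_cons he
        obtain ⟨f2, th2, rfl, he2⟩ := mErase_eq_cons he1
        cases hv with
        | good _ hv1 =>
          cases hv1 with
          | good _ hv2 =>
            obtain ⟨uh', h1, h2, h3⟩ := ih he2 hv2
            exact ⟨(.D, true) :: (.U, true) :: uh', by simp [h1],
              MValid.good _ (MValid.good _ h2), Step.rule Rule.UD h3⟩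
          | badD hv2 =>
            obtain ⟨uh', h1, h2, h3⟩ := ih he2 hv2
            exact ⟨(.D, false) :: (.U, true) :: uh', by simp [h1],
              MValid.badD (MValid.good _ h2), Step.copy _ h3⟩
        | badU hv1 =>
          cases hv1 with
          | good _ hv2 =>
            obtain ⟨uh', h1, h2, h3⟩ := ih he2 hv2
            exact ⟨(.D, true) :: (.U, false) :: uh', by simp [h1],
              MValid.good _ (MValid.badU h2), Step.copy _ h3⟩
          | badD hv2 =>
            obtain ⟨uh', h1, h2, h3⟩ := ih he2 hv2
            exact ⟨(.D, false) :: (.U, false) :: uh', by simp [h1],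
              MValid.badD (MValid.badU h2), h3⟩
      | UD =>
        -- segment DU → UD
        obtain ⟨f1, th1, rfl, he1⟩ := mErase_eq_cons he
        obtain ⟨f2, th2, rfl, he2⟩ := mErase_eq_cons he1
        cases hv with
        | good _ hv1 =>
          cases hv1 with
          | good _ hv2 =>
            obtain ⟨uh', h1, h2, h3⟩ := ih he2 hv2
            exact ⟨(.U, true) :: (.D, true) :: uh', by simp [h1],
              MValid.good _ (MValid.good _ h2), Step.rule Rule.DU h3⟩
          | badU hv2 =>
            obtain ⟨uh', h1, h2, h3⟩ := ih he2 hv2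
            exact ⟨(.U, false) :: (.D, true) :: uh', by simp [h1],
              MValid.badU (MValid.good _ h2), Step.copy _ h3⟩
        | badD hv1 =>
          cases hv1 with
          | good _ hv2 =>
            obtain ⟨uh', h1, h2, h3⟩ := ih he2 hv2
            exact ⟨(.U, true) :: (.D, false) :: uh', by simp [h1],
              MValid.good _ (MValid.badD h2), Step.copy _ h3⟩
          | badU hv2 =>
            obtain ⟨uh', h1, h2, h3⟩ := ih he2 hv2
            exact ⟨(.U, false) :: (.D, false) :: uh', by simp [h1],
              MValid.badU (MValid.badD h2), h3⟩
      | LR =>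
        -- insertion: [] → [L, R]
        obtain ⟨uh', h1, h2, h3⟩ := ih he hv
        exact ⟨(.L, false) :: (.R, false) :: uh', by simp [h1],
          MValid.badL (MValid.badR h2), h3⟩

theorem stepXN_lift {n : ℕ} {t u : List RSym} (h : StepXN n t u) :
    ∀ {th : List MSym}, mErase th = t → MValid 0 th →
      ∃ uh, mErase uh = u ∧ MValid 0 uh ∧ StepN n (mGood th) (mGood uh) := by
  induction h with
  | refl s =>
    intro th he hv
    exact ⟨th, he, hv, StepN.refl _⟩
  | step hx hxn ih =>
    intro th he hv
    obtain ⟨uh, h1, h2, h3⟩ := stepX_lift hx he hv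
    obtain ⟨vh, g1, g2, g3⟩ := ih h1 h2
    exact ⟨vh, g1, g2, StepN.step h3 g3⟩

lemma mValid_allGood : ∀ s : List RSym, MValid 0 (s.map (fun a => (a, true)))
  | [] => MValid.nil
  | a :: s => MValid.good a (mValid_allGood s)

@[simp] lemma mErase_allGood (s : List RSym) :
    mErase (s.map (fun a => (a, true))) = s := by
  induction s <;> simp_all

@[simp] lemma mGood_allGood (s : List RSym) :
    mGood (s.map (fun a => (a, true))) = s := by
  induction s <;> simp_all

/-- Every string reducible to the empty string admits a shortest rewriting
sequence which never uses a replacement whose right-hand side is longer than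
its left-hand side: if `n` is the minimal number of parallel steps (allowing
length-increasing reversed rules) to reach the empty string, then the empty
string is reachable in `n` steps using only the length-nonincreasing rules. -/
theorem shortest_rewriting_without_lengthening (s : List RSym) (n : ℕ)
    (hn : StepXN n s [])
    (hmin : ∀ m, StepXN m s [] → n ≤ m) :
    StepN n s [] := by
  obtain ⟨uh, h1, h2, h3⟩ := stepXN_lift hn (mErase_allGood s) (mValid_allGood s)
  have : uh = [] := mErase_eq_nil h1
  subst this
  simpa using h3
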